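/- The set {(t_1,...,t_n) ∈ ℝⁿ : t_1 + ... + t_n = 0 and t_1 ≤ t_2 ≤ ... ≤ t_n ≤ t_1 + 1} is a fundamental domain for the action of Δ_ℤ ⋊ Σ_n on Δ_ℝ, in the sense that every point of Δ_ℝ = {t ∈ ℝⁿ : Σ t_i = 0} lies in the orbit of some point of this set under the group generated by permutations of coordinates and translations by integer vectors summing to zero. -/

import Mathlib

/-!
Sorting the fractional parts of `t` gives a point of the orbit that is monotone and lies in a
window of length less than one; its coordinate sum `m` is a nonnegative integer. On monotone
points `x` with `x (last) ≤ x 0 + 1`, the move `x ↦ (x (last) - 1, x 0, …, x (n - 1))` (a cyclic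
permutation followed by a translation by `-e₀`) preserves both conditions and lowers the sum by
one, so `m` such moves reach the domain.
-/

open Finset

def IsPermIntTranslate {R : Type*} [AddCommGroupWithOne R] {n : ℕ} (x y : Fin n → R) : Prop :=
  ∃ (σ : Equiv.Perm (Fin n)) (v : Fin n → ℤ), ∀ i, y i = x (σ i) + v i

def SortedWithinOne {R : Type*} [Add R] [One R] [Preorder R] {n : ℕ} (x : Fin (n + 1) → R) :
    Prop :=
  Monotone x ∧ x (Fin.last n) ≤ x 0 + 1

section AddCommGroupWithOne

variable {R : Type*} [AddCommGroupWithOne R] {n : ℕ}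

theorem sum_comp_perm_add_intCast (x : Fin n → R) (σ : Equiv.Perm (Fin n)) (v : Fin n → ℤ) :
    ∑ i, (x (σ i) + v i) = ∑ i, x i + ∑ i, (v i : R) := by
  rw [sum_add_distrib, Equiv.sum_comp σ x]

namespace IsPermIntTranslate

theorem refl (x : Fin n → R) : IsPermIntTranslate x x :=
  ⟨1, 0, fun i => by simp⟩

theorem trans {x y z : Fin n → R} (hxy : IsPermIntTranslate x y)
    (hyz : IsPermIntTranslate y z) : IsPermIntTranslate x z := by
  obtain ⟨σ, v, hv⟩ := hxy
  obtain ⟨τ, w, hw⟩ := hyz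
  refine ⟨τ.trans σ, fun i => v (τ i) + w i, fun i => ?_⟩
  rw [hw, hv, Equiv.trans_apply, Int.cast_add, add_assoc]

theorem exists_sum_eq {x y : Fin n → R} (h : IsPermIntTranslate x y) :
    ∃ m : ℤ, ∑ i, y i = ∑ i, x i + m := by
  obtain ⟨σ, v, hv⟩ := h
  refine ⟨∑ i, v i, ?_⟩
  simp only [hv, sum_comp_perm_add_intCast, Int.cast_sum]

end IsPermIntTranslate

def rotateDown (x : Fin (n + 1) → R) : Fin (n + 1) → R :=
  x ∘ (finRotate (n + 1)).symm - Pi.single 0 1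

theorem rotateDown_zero (x : Fin (n + 1) → R) : rotateDown x 0 = x (Fin.last n) - 1 := by
  simp [rotateDown, (finRotate (n + 1)).symm_apply_eq.mpr (finRotate_last (n := n)).symm]

theorem rotateDown_succ (x : Fin (n + 1) → R) (i : Fin n) :
    rotateDown x i.succ = x i.castSucc := by
  have : (finRotate (n + 1)).symm i.succ = i.castSucc := by
    rw [Equiv.symm_apply_eq, finRotate_apply, Fin.coeSucc_eq_succ]
  simp [rotateDown, this, Fin.succ_ne_zero]

theorem sum_rotateDown (x : Fin (n + 1) → R) : ∑ i, rotateDown x i = ∑ i, x i - 1 := by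
  simp only [rotateDown, Pi.sub_apply, Function.comp_apply, sum_sub_distrib, Equiv.sum_comp,
    sum_pi_single', mem_univ, if_true]

theorem isPermIntTranslate_rotateDown (x : Fin (n + 1) → R) :
    IsPermIntTranslate x (rotateDown x) := by
  refine ⟨(finRotate (n + 1)).symm, -Pi.single 0 1, fun i => ?_⟩
  rcases eq_or_ne i 0 with rfl | hi <;> simp [rotateDown, sub_eq_add_neg, *]

variable [PartialOrder R] [IsOrderedAddMonoid R]

theorem SortedWithinOne.rotateDown_le {x : Fin (n + 1) → R} (hx : SortedWithinOne x) :
    rotateDown x ≤ x := by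
  intro i
  rcases eq_or_ne i 0 with rfl | hi
  · rw [rotateDown_zero, sub_le_iff_le_add]
    exact hx.2
  · have hlt : (finRotate (n + 1)).symm i < i := (finRotate_symm_lt_iff_ne_zero i).mpr hi
    simpa [rotateDown, hi] using hx.1 hlt.le

theorem SortedWithinOne.rotateDown {x : Fin (n + 1) → R} (hx : SortedWithinOne x) :
    SortedWithinOne (rotateDown x) := by
  refine ⟨Fin.monotone_iff_le_succ.mpr fun i => ?_, ?_⟩
  · rw [rotateDown_succ]
    exact hx.rotateDown_le _
  · rw [rotateDown_zero, sub_add_cancel]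
    exact hx.rotateDown_le _

theorem SortedWithinOne.exists_isPermIntTranslate_sum_sub {x : Fin (n + 1) → R}
    (hx : SortedWithinOne x) (k : ℕ) :
    ∃ y, IsPermIntTranslate x y ∧ SortedWithinOne y ∧ ∑ i, y i = ∑ i, x i - k := by
  induction k with
  | zero => exact ⟨x, .refl x, hx, by simp⟩
  | succ k ih =>
    obtain ⟨y, hxy, hy, hy_sum⟩ := ih
    refine ⟨_root_.rotateDown y, hxy.trans (isPermIntTranslate_rotateDown y), hy.rotateDown, ?_⟩
    rw [sum_rotateDown, hy_sum, Nat.cast_succ, sub_add_eq_sub_sub]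

end AddCommGroupWithOne

theorem exists_isPermIntTranslate_sortedWithinOne_nonneg {R : Type*} [Ring R] [LinearOrder R]
    [IsStrictOrderedRing R] [FloorRing R] {n : ℕ} (t : Fin (n + 1) → R) :
    ∃ y, IsPermIntTranslate t y ∧ SortedWithinOne y ∧ 0 ≤ y := by
  set σ := Tuple.sort (Int.fract ∘ t)
  refine ⟨(Int.fract ∘ t) ∘ σ, ⟨σ, fun i => -⌊t (σ i)⌋, fun i => ?_⟩,
    ⟨Tuple.monotone_sort _, ?_⟩, fun i => Int.fract_nonneg _⟩
  · simp [Int.fract, sub_eq_add_neg]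
  · exact (Int.fract_lt_one _).le.trans (le_add_of_nonneg_left (Int.fract_nonneg _))

/-- Morton's fundamental domain: every point of
`Δ_ℝ = {t : Σ t i = 0}` is carried, by a permutation of coordinates followed
by a translation by an integer vector with zero sum (an element of `Δ_ℤ`),
into the region `{t ∈ Δ_ℝ : t 0 ≤ t 1 ≤ ⋯ ≤ t (n-1) ≤ t 0 + 1}`. -/
theorem morton_fundamental_domain (n : ℕ) (t : Fin (n + 1) → ℝ)
    (ht : ∑ i, t i = 0) :
    ∃ (σ : Equiv.Perm (Fin (n + 1))) (v : Fin (n + 1) → ℤ),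
      (∑ i, (v i : ℝ)) = 0 ∧
      (∑ i, (t (σ i) + (v i : ℝ))) = 0 ∧
      (∀ i j : Fin (n + 1), i ≤ j → t (σ i) + (v i : ℝ) ≤ t (σ j) + (v j : ℝ)) ∧
      t (σ (Fin.last n)) + (v (Fin.last n) : ℝ) ≤ t (σ 0) + (v 0 : ℝ) + 1 := by
  obtain ⟨y, hty, hy, hy_nonneg⟩ := exists_isPermIntTranslate_sortedWithinOne_nonneg t
  obtain ⟨m, hm⟩ := hty.exists_sum_eq
  have hm_nonneg : (0 : ℝ) ≤ m := by
    simpa only [hm, ht, zero_add] using sum_nonneg fun i (_ : i ∈ univ) => hy_nonneg i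
  lift m to ℕ using by exact_mod_cast hm_nonneg
  obtain ⟨z, hyz, hz, hz_sum⟩ := hy.exists_isPermIntTranslate_sum_sub m
  obtain ⟨σ, v, hv⟩ := hty.trans hyz
  have hz_zero : ∑ i, z i = 0 := by rw [hz_sum, hm, ht, zero_add, Int.cast_natCast, sub_self]
  have hv_sum : ∑ i, (v i : ℝ) = 0 := by
    simpa only [hv, sum_comp_perm_add_intCast, ht, zero_add] using hz_zero
  simp only [hv] at hz_zero
  exact ⟨σ, v, hv_sum, hz_zero, fun i j hij => by simpa only [hv] using hz.1 hij,
    by simpa only [hv] using hz.2⟩
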